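/- arXiv:2410.08799 — 5 statements merged into one kernel-verified Lean document; each statement's English description precedes it below -/
import Mathlib

section
/- For real numbers h > 0, N > 0, ρ ≥ 0, and any scalar α > 1, it holds that (1 + h/(α·ρ + N))^α > 1 + h/(ρ + N). -/
lemma div_add_le_mul_div_mul_add {h N ρ α : ℝ} (hh : 0 ≤ h) (hN : 0 < N) (hρ : 0 ≤ ρ)
    (hα : 1 ≤ α) : h / (ρ + N) ≤ α * (h / (α * ρ + N)) := by
  have hα0 : 0 < α := by linarith
  have hscaled : α * (h / (α * ρ + N)) = h / (ρ + N / α) := by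
    field_simp
  rw [hscaled]
  apply div_le_div_of_nonneg_left hh (by positivity)
  gcongr
  exact div_le_self hN.le hα

theorem stmt_0 (h N ρ α : ℝ) (hh : 0 < h) (hN : 0 < N) (hρ : 0 ≤ ρ) (hα : 1 < α) :
    (1 + h / (α * ρ + N)) ^ α > 1 + h / (ρ + N) := by
  have hs : 0 < h / (α * ρ + N) := by
    have : 0 < α * ρ + N := by positivity
    positivity
  calc 1 + h / (ρ + N)
      ≤ 1 + α * (h / (α * ρ + N)) := by
        gcongr
        exact div_add_le_mul_div_mul_add hh.le hN hρ hα.le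
    _ < (1 + h / (α * ρ + N)) ^ α :=
        one_add_mul_self_lt_rpow_one_add (by linarith) hs.ne' hα
end

section
/- Define f(ρ) = D / (B · J · log(1 + h / (g(ρ) + N))) where g(ρ) = Σ_{ℓ} ρ_ℓ · h_ℓ with D > 0, B > 0, J > 0, h > 0, N > 0, and h_ℓ ≥ 0, and ρ a nonnegative vector. Then f is scalable: for every α > 1, α · f(ρ) > f(α·ρ). -/
/-! The rate `t ↦ log (1 + h / (t + N))` shrinks by less than the factor `α` when the load `t` is
scaled by `α > 1`: the SINR only drops from `h / (t + N)` to `h / (α t + N) > h / (t + N) / α`, and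
`log (1 + α s) < α log (1 + s)` by Bernoulli's inequality `1 + α s < (1 + s) ^ α`.
Hence `D / (K · rate)` grows by less than the factor `α`. -/

open Real

lemma log_one_add_mul_lt_mul_log_one_add {s p : ℝ} (hs : 0 < s) (hp : 1 < p) :
    log (1 + p * s) < p * log (1 + s) := by
  rw [← log_rpow (by linarith)]
  exact log_lt_log (by nlinarith) (one_add_mul_self_lt_rpow_one_add (by linarith) hs.ne' hp)

lemma div_add_lt_mul_div_mul_add {h N x α : ℝ} (hh : 0 < h) (hN : 0 < N) (hx : 0 ≤ x)
    (hα : 1 < α) : h / (x + N) < α * (h / (α * x + N)) := by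
  rw [mul_div_assoc', div_lt_div_iff₀ (by positivity) (by nlinarith)]
  nlinarith [mul_pos (mul_pos (sub_pos.mpr hα) hh) hN]

lemma log_one_add_div_add_lt_mul {h N x α : ℝ} (hh : 0 < h) (hN : 0 < N) (hx : 0 ≤ x)
    (hα : 1 < α) : log (1 + h / (x + N)) < α * log (1 + h / (α * x + N)) :=
  calc log (1 + h / (x + N))
      < log (1 + α * (h / (α * x + N))) :=
        log_lt_log (by positivity) (by linarith [div_add_lt_mul_div_mul_add hh hN hx hα])
    _ < α * log (1 + h / (α * x + N)) :=
        log_one_add_mul_lt_mul_log_one_add (div_pos hh (by nlinarith)) hα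

lemma div_mul_log_one_add_div_add_lt {D K h N x α : ℝ} (hD : 0 < D) (hK : 0 < K) (hh : 0 < h)
    (hN : 0 < N) (hx : 0 ≤ x) (hα : 1 < α) :
    D / (K * log (1 + h / (α * x + N))) < α * (D / (K * log (1 + h / (x + N)))) := by
  have hlog₁ : 0 < log (1 + h / (x + N)) :=
    log_pos (by linarith [div_pos hh (by linarith : 0 < x + N)])
  have hlog_α : 0 < log (1 + h / (α * x + N)) :=
    log_pos (by linarith [div_pos hh (by nlinarith : 0 < α * x + N)])
  have hlt := log_one_add_div_add_lt_mul hh hN hx hα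
  rw [mul_div_assoc', div_lt_div_iff₀ (by positivity) (by positivity)]
  nlinarith [mul_pos hD hK]

theorem stmt_4 {n : ℕ} (D B J h N : ℝ) (hD : 0 < D) (hB : 0 < B) (hJ : 0 < J)
    (hh : 0 < h) (hN : 0 < N) (hc : Fin n → ℝ) (hhc : ∀ ℓ, 0 ≤ hc ℓ)
    (f : (Fin n → ℝ) → ℝ)
    (hf : ∀ ρ : Fin n → ℝ,
      f ρ = D / (B * J * Real.log (1 + h / ((∑ ℓ, ρ ℓ * hc ℓ) + N))))
    (ρ : Fin n → ℝ) (hρ : ∀ ℓ, 0 ≤ ρ ℓ) (α : ℝ) (hα : 1 < α) :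
    α * f ρ > f (fun ℓ => α * ρ ℓ) := by
  have hload : 0 ≤ ∑ ℓ, ρ ℓ * hc ℓ :=
    Finset.sum_nonneg fun ℓ _ => mul_nonneg (hρ ℓ) (hhc ℓ)
  have hscale : ∑ ℓ, α * ρ ℓ * hc ℓ = α * ∑ ℓ, ρ ℓ * hc ℓ := by
    simp only [Finset.mul_sum, mul_assoc]
  rw [hf, hf, hscale]
  exact div_mul_log_one_add_div_add_lt hD (mul_pos hB hJ) hh hN hload hα
end

section
/- Let f : ℝ_{≥0}^n → ℝ_{≥0}^n be a standard interference function, i.e., f satisfies (i) positivity: f(x) > 0 componentwise for all x ≥ 0; (ii) monotonicity: x ≥ y (componentwise) implies f(x) ≥ f(y); (iii) scalability: for all α > 1 and x ≥ 0, α·f(x) > f(α·x) componentwise. Then f has at most one fixed point in ℝ_{≥0}^n. -/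
theorem stmt6_aux {n : ℕ} (hn : n ≠ 0) (f : (Fin n → ℝ) → (Fin n → ℝ))
    (hpos : ∀ x : Fin n → ℝ, (∀ i, 0 ≤ x i) → ∀ i, 0 < f x i)
    (hmono : ∀ x y : Fin n → ℝ, (∀ i, 0 ≤ y i) → (∀ i, y i ≤ x i) →
      ∀ i, f y i ≤ f x i)
    (hscale : ∀ (α : ℝ), 1 < α → ∀ x : Fin n → ℝ, (∀ i, 0 ≤ x i) →
      ∀ i, f (fun j => α * x j) i < α * f x i)
    (x y : Fin n → ℝ) (hx : ∀ i, 0 ≤ x i) (hy : ∀ i, 0 ≤ y i)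
    (hfx : f x = x) (hfy : f y = y) : ∀ i, y i ≤ x i := by
  have hxpos : ∀ i, 0 < x i := fun i => hfx ▸ hpos x hx i
  haveI : Nonempty (Fin n) := ⟨⟨0, Nat.pos_of_ne_zero hn⟩⟩
  set α := Finset.univ.sup' Finset.univ_nonempty (fun i => y i / x i) with hα
  have hle : ∀ i, y i ≤ α * x i := by
    intro i
    have h := Finset.le_sup' (f := fun i => y i / x i) (Finset.mem_univ i)
    have hxne : x i ≠ 0 := (hxpos i).ne'
    calc y i = (y i / x i) * x i := by field_simp
    _ ≤ α * x i := mul_le_mul_of_nonneg_right h (hxpos i).le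
  by_cases h1 : α ≤ 1
  · intro i
    have := hle i
    nlinarith [hxpos i, hy i]
  · push_neg at h1
    obtain ⟨j, _, hj⟩ := Finset.exists_mem_eq_sup' (Finset.univ_nonempty (α := Fin n))
      (fun i => y i / x i)
    have hyj : y j = α * x j := by
      rw [hα, hj]
      field_simp
      rw [mul_div_assoc, div_self (hxpos j).ne', mul_one]
    have h2 : ∀ i, f y i ≤ f (fun k => α * x k) i :=
      hmono _ y hy (fun i => hle i)
    have h3 : f (fun k => α * x k) j < α * f x j := hscale α h1 x hx j
    have : y j < y j := by
      calc y j = f y j := by rw [hfy]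
      _ ≤ f (fun k => α * x k) j := h2 j
      _ < α * f x j := h3
      _ = α * x j := by rw [hfx]
      _ = y j := hyj.symm
    exact absurd this (lt_irrefl _)

theorem stmt_6 {n : ℕ} (f : (Fin n → ℝ) → (Fin n → ℝ))
    (hpos : ∀ x : Fin n → ℝ, (∀ i, 0 ≤ x i) → ∀ i, 0 < f x i)
    (hmono : ∀ x y : Fin n → ℝ, (∀ i, 0 ≤ y i) → (∀ i, y i ≤ x i) →
      ∀ i, f y i ≤ f x i)
    (hscale : ∀ (α : ℝ), 1 < α → ∀ x : Fin n → ℝ, (∀ i, 0 ≤ x i) →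
      ∀ i, f (fun j => α * x j) i < α * f x i)
    (x y : Fin n → ℝ) (hx : ∀ i, 0 ≤ x i) (hy : ∀ i, 0 ≤ y i)
    (hfx : f x = x) (hfy : f y = y) :
    x = y := by
  rcases Nat.eq_zero_or_pos n with h | h
  · funext i
    exact absurd i.isLt (by omega)
  · have h1 := stmt6_aux (by omega) f hpos hmono hscale x y hx hy hfx hfy
    have h2 := stmt6_aux (by omega) f hpos hmono hscale y x hy hx hfy hfx
    funext i
    exact le_antisymm (h2 i) (h1 i)
end

section
/- At any optimal solution of the problem: minimize ρ̂ subject to ρ_{ij} · B · log(1 + h_{ij}/(Σ_{ℓ≠i} Σ_k ρ_{ℓk} h_{ℓkj} + N)) ≥ D_i/J_i for all users, and Σ_j ρ_{ij} ≤ ρ̂ for all cells, there exists an optimal solution in which the rate constraints hold with equality for all users. -/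
theorem stmt_10 {I : Type*} [Fintype I] [DecidableEq I]
    (J : I → ℕ) (hJ : ∀ i, 0 < J i)
    (B N : ℝ) (hB : 0 < B) (hN : 0 < N)
    (D : I → ℝ) (hD : ∀ i, 0 < D i)
    (h : (i : I) → Fin (J i) → ℝ) (hh : ∀ i j, 0 < h i j)
    (hI : (ℓ : I) → Fin (J ℓ) → (i : I) → Fin (J i) → ℝ)
    (hhI : ∀ ℓ k i j, 0 ≤ hI ℓ k i j)
    (Feas : ((i : I) → Fin (J i) → ℝ) → ℝ → Prop)
    (hFeas : ∀ ρ r, Feas ρ r ↔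
      (∀ i j, 0 ≤ ρ i j) ∧
      (∀ i j, ρ i j * B * Real.log (1 + h i j /
          ((∑ ℓ ∈ Finset.univ.erase i, ∑ k, ρ ℓ k * hI ℓ k i j) + N)) ≥ D i / (J i : ℝ)) ∧
      (∀ i, ∑ j, ρ i j ≤ r))
    (ρ : (i : I) → Fin (J i) → ℝ) (r : ℝ)
    (hfeas : Feas ρ r) (hopt : ∀ ρ' r', Feas ρ' r' → r ≤ r') :
    ∃ ρ' : (i : I) → Fin (J i) → ℝ, Feas ρ' r ∧
      ∀ i j, ρ' i j * B * Real.log (1 + h i j /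
          ((∑ ℓ ∈ Finset.univ.erase i, ∑ k, ρ' ℓ k * hI ℓ k i j) + N)) = D i / (J i : ℝ) := by
  classical
  rw [hFeas] at hfeas
  obtain ⟨h0, hrate, hsum⟩ := hfeas
  have hc : ∀ i, 0 < D i / (J i : ℝ) := fun i =>
    div_pos (hD i) (by exact_mod_cast hJ i)
  set Itf : ((i : I) → Fin (J i) → ℝ) → (i : I) → Fin (J i) → ℝ :=
    fun σ i j => ∑ ℓ ∈ Finset.univ.erase i, ∑ k, σ ℓ k * hI ℓ k i j with hItfdef
  set L : ((i : I) → Fin (J i) → ℝ) → (i : I) → Fin (J i) → ℝ :=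
    fun σ i j => Real.log (1 + h i j / (Itf σ i j + N)) with hLdef
  have hItf_nn : ∀ σ, (∀ i j, 0 ≤ σ i j) → ∀ i j, 0 ≤ Itf σ i j := by
    intro σ hσ i j
    apply Finset.sum_nonneg; intro ℓ _
    apply Finset.sum_nonneg; intro k _
    exact mul_nonneg (hσ ℓ k) (hhI ℓ k i j)
  have hItf_mono : ∀ σ σ', (∀ i j, σ i j ≤ σ' i j) → ∀ i j, Itf σ i j ≤ Itf σ' i j := by
    intro σ σ' hle i j
    apply Finset.sum_le_sum; intro ℓ _
    apply Finset.sum_le_sum; intro k _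
    exact mul_le_mul_of_nonneg_right (hle ℓ k) (hhI ℓ k i j)
  -- L is antitone on nonneg vectors
  have hL_anti : ∀ σ σ', (∀ i j, 0 ≤ σ i j) → (∀ i j, σ i j ≤ σ' i j) →
      ∀ i j, L σ' i j ≤ L σ i j := by
    intro σ σ' h0σ hle i j
    have d1 : 0 < Itf σ i j + N := by linarith [hItf_nn σ h0σ i j]
    have d2 : 0 < Itf σ' i j + N := by
      have := hItf_mono σ σ' hle i j; linarith
    have harg : h i j / (Itf σ' i j + N) ≤ h i j / (Itf σ i j + N) :=
      div_le_div_of_nonneg_left (hh i j).le d1 (by linarith [hItf_mono σ σ' hle i j])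
    have hp2 : 0 < h i j / (Itf σ' i j + N) := div_pos (hh i j) d2
    exact Real.log_le_log (by linarith) (by linarith)
  -- positivity of L at ρ
  have hLρ_pos : ∀ i j, 0 < L ρ i j := by
    intro i j
    by_contra hcon
    push_neg at hcon
    have h1' : D i / (J i : ℝ) ≤ ρ i j * B * L ρ i j := hrate i j
    nlinarith [hc i, mul_nonneg (h0 i j) hB.le, hcon]
  -- The box predicate
  set InBox : ((i : I) → Fin (J i) → ℝ) → Prop :=
    fun σ => ∀ i j, 0 ≤ σ i j ∧ σ i j ≤ ρ i j with hInBoxdef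
  have hL_pos : ∀ σ, InBox σ → ∀ i j, 0 < L σ i j := by
    intro σ hσ i j
    exact lt_of_lt_of_le (hLρ_pos i j)
      (hL_anti σ ρ (fun i j => (hσ i j).1) (fun i j => (hσ i j).2) i j)
  set T : ((i : I) → Fin (J i) → ℝ) → (i : I) → Fin (J i) → ℝ :=
    fun σ i j => (D i / (J i : ℝ)) / (B * L σ i j) with hTdef
  have hT_pos : ∀ σ, InBox σ → ∀ i j, 0 < T σ i j := by
    intro σ hσ i j
    exact div_pos (hc i) (mul_pos hB (hL_pos σ hσ i j))
  have hT_mono : ∀ σ σ', InBox σ → InBox σ' → (∀ i j, σ i j ≤ σ' i j) →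
      ∀ i j, T σ i j ≤ T σ' i j := by
    intro σ σ' hσ hσ' hle i j
    have hL' : 0 < L σ' i j := hL_pos σ' hσ' i j
    have hLle : L σ' i j ≤ L σ i j := hL_anti σ σ' (fun i j => (hσ i j).1) hle i j
    exact div_le_div_of_nonneg_left (hc i).le (mul_pos hB hL')
      (mul_le_mul_of_nonneg_left hLle hB.le)
  have hBox_ρ : InBox ρ := fun i j => ⟨h0 i j, le_refl _⟩
  have hTρ_le : ∀ i j, T ρ i j ≤ ρ i j := by
    intro i j
    have hpos : 0 < B * L ρ i j := mul_pos hB (hLρ_pos i j)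
    rw [div_le_iff₀ hpos]
    have := hrate i j
    simp only [ge_iff_le] at this
    calc D i / (J i : ℝ) ≤ ρ i j * B * L ρ i j := this
      _ = ρ i j * (B * L ρ i j) := by ring
  have hT_le_ρ : ∀ σ, InBox σ → ∀ i j, T σ i j ≤ ρ i j := by
    intro σ hσ i j
    exact le_trans (hT_mono σ ρ hσ hBox_ρ (fun i j => (hσ i j).2) i j) (hTρ_le i j)
  -- The Tarski set and candidate fixed point
  set S : Set ((i : I) → Fin (J i) → ℝ) :=
    {σ | InBox σ ∧ ∀ i j, T σ i j ≤ σ i j} with hSdef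
  have hρS : ρ ∈ S := ⟨hBox_ρ, hTρ_le⟩
  set m : (i : I) → Fin (J i) → ℝ :=
    fun i j => sInf ((fun σ => σ i j) '' S) with hmdef
  have hne : ∀ i (j : Fin (J i)), ((fun σ => σ i j) '' S).Nonempty :=
    fun i j => ⟨ρ i j, ⟨ρ, hρS, rfl⟩⟩
  have hbdd : ∀ i (j : Fin (J i)), BddBelow ((fun σ => σ i j) '' S) := by
    intro i j
    refine ⟨0, ?_⟩
    rintro x ⟨σ, hσ, rfl⟩
    exact (hσ.1 i j).1
  have hm_le : ∀ σ ∈ S, ∀ i j, m i j ≤ σ i j := by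
    intro σ hσ i j
    exact csInf_le (hbdd i j) ⟨σ, hσ, rfl⟩
  have hm0 : ∀ i j, 0 ≤ m i j := by
    intro i j
    apply le_csInf (hne i j)
    rintro x ⟨σ, hσ, rfl⟩
    exact (hσ.1 i j).1
  have hBox_m : InBox m := fun i j => ⟨hm0 i j, hm_le ρ hρS i j⟩
  have hTm_le_m : ∀ i j, T m i j ≤ m i j := by
    intro i j
    apply le_csInf (hne i j)
    rintro x ⟨σ, hσ, rfl⟩
    exact le_trans (hT_mono m σ hBox_m hσ.1 (hm_le σ hσ) i j) (hσ.2 i j)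
  have hmS : m ∈ S := ⟨hBox_m, hTm_le_m⟩
  have hBox_Tm : InBox (T m) := fun i j =>
    ⟨(hT_pos m hBox_m i j).le, hT_le_ρ m hBox_m i j⟩
  have hTmS : T m ∈ S := ⟨hBox_Tm, hT_mono (T m) m hBox_Tm hBox_m hTm_le_m⟩
  have hfix : ∀ i j, m i j = T m i j := by
    intro i j
    exact le_antisymm (hm_le (T m) hTmS i j) (hTm_le_m i j)
  have key : ∀ i j, m i j * B * L m i j = D i / (J i : ℝ) := by
    intro i j
    have hpos : B * L m i j ≠ 0 := (mul_pos hB (hL_pos m hBox_m i j)).ne'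
    rw [hfix i j]
    show (D i / (J i : ℝ)) / (B * L m i j) * B * L m i j = D i / (J i : ℝ)
    rw [mul_assoc, div_mul_cancel₀ _ hpos]
  refine ⟨m, ?_, fun i j => key i j⟩
  rw [hFeas]
  refine ⟨hm0, fun i j => (key i j).ge, fun i => ?_⟩
  calc ∑ j, m i j ≤ ∑ j, ρ i j := Finset.sum_le_sum (fun j _ => hm_le ρ hρS i j)
    _ ≤ r := hsum i
end

section
/- Let f_i(ρ_{-i}) = Σ_{j∈J_i} D_i / (B·J_i·log(1 + h_{ij}/(Σ_{ℓ≠i} ρ_ℓ γ_{ℓj} + N))) where D_i > 0, B > 0, J_i is the (positive) number of users in cell i, h_{ij} > 0, γ_{ℓj} ≥ 0, N > 0, and ρ_{-i} is a nonnegative vector of cell loads. Then f_i is a standard interference function: it is positive, monotone in ρ_{-i}, and satisfies α·f_i(ρ_{-i}) > f_i(α·ρ_{-i}) for all α > 1. -/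
/-!
Each user's load `D / (B J log (1 + h / (I + N)))` is a standard interference function of the
interference `I` it receives: positive and nondecreasing because `log (1 + h / (I + N))` is
positive and nonincreasing, and strictly scalable because Bernoulli's inequality
`(1 + x / α) ^ α ≥ 1 + x` gives `log (1 + x) ≤ α log (1 + x / α)`, while
`α I + N < α (I + N)` makes the inequality strict. The interference is a nonnegative linear
function of the loads, and standard interference functions are preserved by precomposition
with monotone linear maps and by finite nonempty sums.
-/

open Real Finset Matrix

/-- Yates' standard interference function, on the nonnegative cone of an ordered module. -/
def IsStandardInterference {E : Type*} [AddCommMonoid E] [PartialOrder E] [Module ℝ E]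
    (f : E → ℝ) : Prop :=
  (∀ x, 0 ≤ x → 0 < f x) ∧
  (∀ x y, 0 ≤ x → x ≤ y → f x ≤ f y) ∧
  (∀ x, 0 ≤ x → ∀ α : ℝ, 1 < α → f (α • x) < α * f x)

namespace IsStandardInterference

variable {E F : Type*} [AddCommMonoid E] [PartialOrder E] [Module ℝ E]
  [AddCommMonoid F] [PartialOrder F] [Module ℝ F]

theorem comp {f : F → ℝ} (hf : IsStandardInterference f) (L : E →ₗ[ℝ] F) (hL : Monotone L) :
    IsStandardInterference (f ∘ L) := by
  obtain ⟨hpos, hmono, hscal⟩ := hf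
  have hL0 : ∀ x, 0 ≤ x → 0 ≤ L x := fun x hx => map_zero L ▸ hL hx
  refine ⟨fun x hx => hpos _ (hL0 x hx), fun x y hx hxy => hmono _ _ (hL0 x hx) (hL hxy),
    fun x hx α hα => ?_⟩
  simpa only [Function.comp_apply, map_smul] using hscal _ (hL0 x hx) α hα

theorem sum {ι : Type*} {s : Finset ι} (hs : s.Nonempty) {f : ι → E → ℝ}
    (hf : ∀ i ∈ s, IsStandardInterference (f i)) :
    IsStandardInterference fun x => ∑ i ∈ s, f i x := by
  refine ⟨fun x hx => sum_pos (fun i hi => (hf i hi).1 x hx) hs,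
    fun x y hx hxy => sum_le_sum fun i hi => (hf i hi).2.1 x y hx hxy,
    fun x hx α hα => ?_⟩
  rw [mul_sum]
  exact sum_lt_sum_of_nonempty hs fun i hi => (hf i hi).2.2 x hx α hα

end IsStandardInterference

theorem log_one_add_le_mul_log_one_add_div {x α : ℝ} (hx : 0 ≤ x) (hα : 1 ≤ α) :
    log (1 + x) ≤ α * log (1 + x / α) := by
  have hα0 : 0 < α := by linarith
  have hbernoulli : 1 + α * (x / α) ≤ (1 + x / α) ^ α :=
    one_add_mul_self_le_rpow_one_add (by linarith [div_nonneg hx hα0.le]) hα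
  rw [mul_div_cancel₀ x hα0.ne'] at hbernoulli
  calc log (1 + x) ≤ log ((1 + x / α) ^ α) := log_le_log (by linarith) hbernoulli
    _ = α * log (1 + x / α) := log_rpow (by positivity) α

theorem log_one_add_div_lt_mul_log_one_add_div_mul_add {a N I α : ℝ} (ha : 0 < a) (hN : 0 < N)
    (hI : 0 ≤ I) (hα : 1 < α) :
    log (1 + a / (I + N)) < α * log (1 + a / (α * I + N)) := by
  have hα0 : 0 < α := by linarith
  have hspread : α * I + N < α * (I + N) := by nlinarith
  calc log (1 + a / (I + N)) ≤ α * log (1 + a / (I + N) / α) :=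
        log_one_add_le_mul_log_one_add_div (by positivity) hα.le
    _ = α * log (1 + a / (α * (I + N))) := by rw [div_div, mul_comm (I + N)]
    _ < α * log (1 + a / (α * I + N)) := by gcongr

theorem isStandardInterference_div_log_one_add_div {c a N : ℝ} (hc : 0 < c) (ha : 0 < a)
    (hN : 0 < N) : IsStandardInterference fun I : ℝ => c / log (1 + a / (I + N)) := by
  have hlog_pos : ∀ I : ℝ, 0 ≤ I → 0 < log (1 + a / (I + N)) := fun I hI =>
    log_pos (lt_add_of_pos_right 1 (by positivity))
  refine ⟨fun I hI => div_pos hc (hlog_pos I hI), fun I I' hI hII' => ?_, fun I hI α hα => ?_⟩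
  · have hI' : 0 ≤ I' := hI.trans hII'
    refine div_le_div_of_nonneg_left hc.le (hlog_pos I' hI') ?_
    gcongr
  · have hαI : 0 ≤ α * I := mul_nonneg (by linarith) hI
    change c / log (1 + a / (α * I + N)) < α * (c / log (1 + a / (I + N)))
    rw [mul_div_assoc', div_lt_div_iff₀ (hlog_pos _ hαI) (hlog_pos I hI), mul_comm α c, mul_assoc]
    exact mul_lt_mul_of_pos_left (log_one_add_div_lt_mul_log_one_add_div_mul_add ha hN hI hα) hc

theorem monotone_vecMulLinear {m n : Type*} [Fintype m] {M : Matrix m n ℝ} (hM : ∀ i j, 0 ≤ M i j) :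
    Monotone M.vecMulLinear := fun _ _ hxy j =>
  dotProduct_le_dotProduct_of_nonneg_right hxy (hM · j)

theorem stmt_19 {n : ℕ} (J : ℕ) (hJ : 0 < J) (D B N : ℝ)
    (hD : 0 < D) (hB : 0 < B) (hN : 0 < N)
    (h : Fin J → ℝ) (hh : ∀ j, 0 < h j)
    (γ : Fin n → Fin J → ℝ) (hγ : ∀ ℓ j, 0 ≤ γ ℓ j)
    (f : (Fin n → ℝ) → ℝ)
    (hf : ∀ ρ : Fin n → ℝ, f ρ = ∑ j, D / (B * (J : ℝ) *
      Real.log (1 + h j / ((∑ ℓ, ρ ℓ * γ ℓ j) + N)))) :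
    (∀ ρ : Fin n → ℝ, (∀ ℓ, 0 ≤ ρ ℓ) → 0 < f ρ) ∧
    (∀ ρ ρ' : Fin n → ℝ, (∀ ℓ, 0 ≤ ρ ℓ) → (∀ ℓ, ρ ℓ ≤ ρ' ℓ) → f ρ ≤ f ρ') ∧
    (∀ ρ : Fin n → ℝ, (∀ ℓ, 0 ≤ ρ ℓ) → ∀ α : ℝ, 1 < α →
      f (fun ℓ => α * ρ ℓ) < α * f ρ) := by
  have hf_eq : f = fun ρ => ∑ j, D / (B * J) / log (1 + h j / (vecMulLinear γ ρ j + N)) := by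
    funext ρ
    simp only [hf, div_mul_eq_div_div]
    rfl
  have huser : ∀ j, IsStandardInterference fun I : ℝ => D / (B * J) / log (1 + h j / (I + N)) :=
    fun j => isStandardInterference_div_log_one_add_div (by positivity) (hh j) hN
  have hstd : IsStandardInterference f := by
    rw [hf_eq]
    refine IsStandardInterference.sum (univ_nonempty_iff.mpr ⟨⟨0, hJ⟩⟩) fun j _ => ?_
    exact (huser j).comp (LinearMap.proj j ∘ₗ vecMulLinear γ)
      fun _ _ hρ => monotone_vecMulLinear hγ hρ j
  exact hstd
end
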